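/- arXiv:0806.1327 — 2 statements merged into one kernel-verified Lean document; each statement's English description precedes it below -/
import Mathlib

section
/- The limit as N → ∞ of (1/N) ∑_{m=1}^{N} ∏_{p prime, p ∣ m} (1 + 1/p) equals ζ(2)/ζ(4) = 15/π². -/
/-!
For `m ≠ 0`, `∏_{p ∣ m} (1 + 1/p) = ∑_{d ∣ m} μ(d)²/d`. Averaging a divisor sum `∑_{d ∣ m} f d`
over `m ≤ N` weights `f d` by `⌊N/d⌋/N → 1/d`, so by dominated convergence the mean tends to
`∑ f d / d = ∑ μ(d)²/d²`. Its Euler factors `1 + p⁻² = (1 - p⁻⁴)/(1 - p⁻²)` identify this sum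
with `ζ(2)/ζ(4)`.
-/

open Filter Finset

lemma tendsto_natCast_div_div_natCast (d : ℕ) :
    Tendsto (fun N : ℕ => ((N / d : ℕ) : ℝ) / N) atTop (nhds (d : ℝ)⁻¹) := by
  rcases Nat.eq_zero_or_pos d with rfl | hd
  · simp
  have hfloor : ∀ N : ℕ, ((N / d : ℕ) : ℝ) / N = ⌊(N : ℝ) / d⌋₊ / ((N : ℝ) / d) * (d : ℝ)⁻¹ := by
    intro N
    rw [Nat.floor_div_eq_div]
    rcases Nat.eq_zero_or_pos N with rfl | hN
    · simp
    field_simp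
  simp_rw [hfloor]
  simpa using (tendsto_nat_floor_div_atTop.comp
    ((tendsto_natCast_atTop_atTop).atTop_div_const (by positivity : (0:ℝ) < d))).mul_const (d : ℝ)⁻¹

lemma natCast_div_div_natCast_le (N d : ℕ) : ((N / d : ℕ) : ℝ) / N ≤ (d : ℝ)⁻¹ := by
  rcases Nat.eq_zero_or_pos N with rfl | hN
  · simp
  calc ((N / d : ℕ) : ℝ) / N ≤ (N / d : ℝ) / N := by gcongr; exact Nat.cast_div_le
    _ = (d : ℝ)⁻¹ := by field_simp

theorem ArithmeticFunction.tendsto_average_sum_divisors {𝕜 : Type*} [RCLike 𝕜]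
    (f : ArithmeticFunction 𝕜) (hf : Summable fun d => ‖f d‖ / d) :
    Tendsto (fun N : ℕ => (N : 𝕜)⁻¹ * ∑ m ∈ Icc 1 N, ∑ d ∈ m.divisors, f d) atTop
      (nhds (∑' d, f d / d)) := by
  have hsum : ∀ N : ℕ, (N : 𝕜)⁻¹ * ∑ m ∈ Icc 1 N, ∑ d ∈ m.divisors, f d
      = ∑' d, f d * ((((N / d : ℕ) : ℝ) / N : ℝ) : 𝕜) := by
    intro N
    simp_rw [← coe_mul_zeta_apply]
    rw [show Icc 1 N = Ioc 0 N from Icc_add_one_left_eq_Ioc 0 N, sum_Ioc_mul_zeta_eq_sum, mul_sum,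
      tsum_eq_sum (s := Ioc 0 N)]
    · refine sum_congr rfl fun d _ => ?_
      push_cast
      ring
    · -- `f 0 = 0`, and `N / d = 0` for `d > N`
      intro d hd
      rcases Nat.eq_zero_or_pos d with rfl | hd0
      · simp
      · simp [Nat.div_eq_of_lt (by simp_all : N < d)]
  refine (tendsto_tsum_of_dominated_convergence hf (fun d => ?_) ?_).congr fun N => (hsum N).symm
  · have h := ((RCLike.continuous_ofReal (K := 𝕜)).tendsto _).comp
      (tendsto_natCast_div_div_natCast d)
    simpa [div_eq_mul_inv] using h.const_mul (f d)
  · refine Eventually.of_forall fun N d => ?_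
    rw [norm_mul, RCLike.norm_ofReal, abs_of_nonneg (by positivity), div_eq_mul_inv (‖f d‖)]
    exact mul_le_mul_of_nonneg_left (natCast_div_div_natCast_le N d) (norm_nonneg _)

theorem Nat.prod_primeFactors_one_add {R : Type*} [CommSemiring R] (f : ℕ → R) {m : ℕ}
    (hm : m ≠ 0) :
    ∏ p ∈ m.primeFactors, (1 + f p)
      = ∑ d ∈ m.divisors with Squarefree d, ∏ p ∈ d.primeFactors, f p := by
  rw [Nat.sum_divisors_filter_squarefree hm, Nat.factors_eq, List.toFinset_coe,
    Nat.toFinset_factors, prod_one_add]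
  refine sum_congr rfl fun t ht => ?_
  rw [← Multiset.map_id' t.val, prod_map_val,
    Nat.primeFactors_prod fun p hp => Nat.prime_of_mem_primeFactors (mem_powerset.mp ht hp)]

theorem Nat.prod_primeFactors_one_add_inv {K : Type*} [Semifield K] {m : ℕ} (hm : m ≠ 0) :
    ∏ p ∈ m.primeFactors, (1 + (p : K)⁻¹) = ∑ d ∈ m.divisors with Squarefree d, (d : K)⁻¹ := by
  rw [Nat.prod_primeFactors_one_add _ hm]
  refine sum_congr rfl fun d hd => ?_
  rw [prod_inv_distrib, ← Nat.cast_prod, Nat.prod_primeFactors_of_squarefree (mem_filter.mp hd).2]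

lemma inv_one_sub_sq_mul_one_add {K : Type*} [Field K] {x : K} (hx : 1 + x ≠ 0) :
    (1 - x ^ 2)⁻¹ * (1 + x) = (1 - x)⁻¹ := by
  rw [show 1 - x ^ 2 = (1 - x) * (1 + x) by ring, mul_inv, mul_assoc, inv_mul_cancel₀ hx, mul_one]

lemma inv_one_sub_cpow_neg_two_mul_mul_one_add {p : ℕ} (hp : 1 < p) {s : ℂ} (hs : 0 < s.re) :
    (1 - (p : ℂ) ^ (-(2 * s)))⁻¹ * (1 + (p : ℂ) ^ (-s)) = (1 - (p : ℂ) ^ (-s))⁻¹ := by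
  have hnorm : ‖(p : ℂ) ^ (-s)‖ < 1 := by
    rw [Complex.norm_natCast_cpow_of_pos (by omega)]
    exact Real.rpow_lt_one_of_one_lt_of_neg (by exact_mod_cast hp) (by simpa using hs)
  rw [show -(2 * s) = (2 : ℕ) * -s by push_cast; ring, Complex.cpow_nat_mul]
  refine inv_one_sub_sq_mul_one_add fun h => ?_
  rw [eq_neg_of_add_eq_zero_right h, norm_neg, norm_one] at hnorm
  exact lt_irrefl _ hnorm

lemma tsum_squarefree_prime_pow_cpow_neg {p : ℕ} (hp : p.Prime) (s : ℂ) :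
    ∑' e, (if Squarefree (p ^ e) then ((p ^ e : ℕ) : ℂ) ^ (-s) else 0) = 1 + (p : ℂ) ^ (-s) := by
  rw [tsum_eq_sum (s := {0, 1}), sum_pair zero_ne_one]
  · simp [hp.squarefree]
  · intro e he
    simp only [mem_insert, mem_singleton, not_or] at he
    simp [Nat.squarefree_pow_iff hp.ne_one he.1, he.2]

theorem tsum_squarefree_cpow_neg {s : ℂ} (hs : 1 < s.re) :
    ∑' n : ℕ, (if Squarefree n then (n : ℂ) ^ (-s) else 0)
      = riemannZeta s / riemannZeta (2 * s) := by
  set F : ℕ → ℂ := fun n => if Squarefree n then (n : ℂ) ^ (-s) else 0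
  have hmul : ∀ {m n : ℕ}, m.Coprime n → F (m * n) = F m * F n := by
    intro m n h
    simp only [F, Nat.squarefree_mul h]
    by_cases hm : Squarefree m <;> by_cases hn : Squarefree n <;>
      simp [hm, hn, Complex.natCast_mul_natCast_cpow]
  have hsum : Summable (‖F ·‖) := by
    refine (summable_riemannZetaSummand hs).of_nonneg_of_le (fun _ => norm_nonneg _) fun n => ?_
    simp only [F, riemannZetaSummandHom, MonoidWithZeroHom.coe_mk, ZeroHom.coe_mk]
    split_ifs <;> simp
  have hF : HasProd (fun p : Nat.Primes => 1 + (p : ℂ) ^ (-s)) (∑' n, F n) :=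
    (EulerProduct.eulerProduct_hasProd (by simp [F]) hmul hsum (by simp [F])).congr_fun
      fun p => (tsum_squarefree_prime_pow_cpow_neg p.2 s).symm
  have hprod := (riemannZeta_eulerProduct_hasProd (s := 2 * s) (by simp; linarith)).mul hF
  rw [funext fun p : Nat.Primes =>
    inv_one_sub_cpow_neg_two_mul_mul_one_add p.2.one_lt (by linarith)] at hprod
  rw [(riemannZeta_eulerProduct_hasProd hs).unique hprod, mul_div_cancel_left₀]
  exact riemannZeta_ne_zero_of_one_lt_re (by simp; linarith)

namespace ArithmeticFunction

noncomputable def squarefreeInv : ArithmeticFunction ℂ :=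
  ⟨fun d => if Squarefree d then (d : ℂ)⁻¹ else 0, by simp⟩

lemma squarefreeInv_apply (d : ℕ) : squarefreeInv d = if Squarefree d then (d : ℂ)⁻¹ else 0 :=
  rfl

lemma sum_divisors_squarefreeInv {m : ℕ} (hm : m ≠ 0) :
    ∑ d ∈ m.divisors, squarefreeInv d = ∏ p ∈ m.primeFactors, (1 + (p : ℂ)⁻¹) := by
  simp only [squarefreeInv_apply, ← sum_filter, Nat.prod_primeFactors_one_add_inv hm]

lemma squarefreeInv_div_eq (d : ℕ) :
    squarefreeInv d / d = if Squarefree d then (d : ℂ) ^ (-2 : ℂ) else 0 := by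
  rw [squarefreeInv_apply, Complex.cpow_neg, Complex.cpow_ofNat]
  split_ifs <;> simp [sq, div_eq_mul_inv]

lemma summable_norm_squarefreeInv_div : Summable fun d => ‖squarefreeInv d‖ / d := by
  refine (Real.summable_one_div_nat_pow.mpr one_lt_two).of_nonneg_of_le (fun _ => by positivity)
    fun d => ?_
  rw [squarefreeInv_apply]
  split_ifs
  · simp [sq, div_eq_mul_inv]
  · simp only [norm_zero, zero_div]
    positivity

lemma tsum_squarefreeInv_div : ∑' d, squarefreeInv d / d = riemannZeta 2 / riemannZeta 4 := by
  simp_rw [squarefreeInv_div_eq]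
  rw [tsum_squarefree_cpow_neg (by norm_num)]
  norm_num

end ArithmeticFunction

theorem cesaro_euler_like_fifteen_over_pi_sq :
    Tendsto (fun N : ℕ =>
        (1 / (N : ℂ)) * ∑ m ∈ Finset.Icc 1 N,
          ∏ p ∈ m.primeFactors, (1 + 1 / (p : ℂ)))
      atTop (nhds (riemannZeta 2 / riemannZeta 4)) ∧
    riemannZeta 2 / riemannZeta 4 = 15 / (Real.pi : ℂ) ^ 2 := by
  constructor
  · have h := ArithmeticFunction.tendsto_average_sum_divisors _
      ArithmeticFunction.summable_norm_squarefreeInv_div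
    rw [ArithmeticFunction.tsum_squarefreeInv_div] at h
    refine h.congr fun N => ?_
    simp only [one_div]
    congr 1
    exact sum_congr rfl fun m hm =>
      ArithmeticFunction.sum_divisors_squarefreeInv (by simp at hm; omega)
  · rw [riemannZeta_two, riemannZeta_four]
    field_simp
    ring
end

section
/- Let χ be a Dirichlet character and s a complex number with real part greater than 1. Then the Cesàro means (1/N) ∑_{m=1}^{N} ∏_{p prime, p ∣ m} (1 − χ(p)/p^{s-1}) converge, as N → ∞, to 1/L(χ, s), where L(χ, s) = ∑_{m=1}^{∞} χ(m)/m^s is the Dirichlet L-series of χ. -/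
open Filter Finset Topology ArithmeticFunction
open scoped ArithmeticFunction.Moebius LSeries.notation

/-!
Since `d ↦ χ d / d ^ (s - 1)` is multiplicative, the product over `p ∣ m` is the divisor sum
`∑_{d ∣ m} μ d χ d / d ^ (s - 1)`. Exchanging the sums, the Cesàro mean becomes
`∑_{d ≤ N} (⌊N / d⌋ / N) μ d χ d / d ^ (s - 1)`; the weights `⌊N / d⌋ / N` are at most `1 / d` and
tend to `1 / d`, so by dominated convergence the mean tends to `∑ μ d χ d / d ^ s = 1 / L(χ, s)`.
-/

theorem Nat.squarefree_prod_primeFactors (n : ℕ) : Squarefree (∏ p ∈ n.primeFactors, p) :=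
  squarefree_prod_of_pairwise_isCoprime
    (fun _ hp _ hq hpq => Nat.coprime_iff_isRelPrime.mp <|
      (Nat.coprime_primes (Nat.prime_of_mem_primeFactors hp)
        (Nat.prime_of_mem_primeFactors hq)).mpr hpq)
    fun _ hp => (Nat.prime_of_mem_primeFactors hp).squarefree

/-- Reduces to the squarefree case for the radical of `n`: the divisors of `n` that do not
divide the radical are not squarefree, so `μ` kills them. -/
theorem ArithmeticFunction.IsMultiplicative.prod_primeFactors_one_sub {R : Type*} [CommRing R]
    {f : ArithmeticFunction R} (hf : f.IsMultiplicative) {n : ℕ} (hn : n ≠ 0) :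
    ∏ p ∈ n.primeFactors, (1 - f p) = ∑ d ∈ n.divisors, μ d * f d := by
  have hrad := Nat.squarefree_prod_primeFactors n
  calc ∏ p ∈ n.primeFactors, (1 - f p)
      = ∏ p ∈ (∏ p ∈ n.primeFactors, p).primeFactors, (1 - f p) := by
        rw [Nat.primeFactors_prod_primeFactors]
    _ = ∑ d ∈ (∏ p ∈ n.primeFactors, p).divisors, μ d * f d :=
        hf.prodPrimeFactors_one_sub_of_squarefree f hrad
    _ = ∑ d ∈ n.divisors, μ d * f d := by
      refine sum_subset (Nat.divisors_subset_of_dvd hn n.prod_primeFactors_dvd)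
        fun d hdn hdrad => ?_
      rw [moebius_eq_zero_of_not_squarefree, Int.cast_zero, zero_mul]
      intro hd
      refine hdrad (Nat.mem_divisors.mpr ⟨?_, hrad.ne_zero⟩)
      rw [← Nat.prod_primeFactors_of_squarefree hd, Nat.prod_primeFactors_dvd_iff hrad.ne_zero,
        Nat.primeFactors_prod_primeFactors]
      exact Nat.primeFactors_mono (Nat.dvd_of_mem_divisors hdn) hn

theorem Nat.sum_Icc_sum_divisors_eq_sum_div_smul {M : Type*} [AddCommMonoid M] (f : ℕ → M)
    (N : ℕ) :
    ∑ m ∈ Icc 1 N, ∑ d ∈ m.divisors, f d = ∑ d ∈ Icc 1 N, (N / d) • f d := by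
  rw [sum_comm' (t' := Icc 1 N) (s' := fun d => {m ∈ Icc 1 N | d ∣ m})]
  · refine sum_congr rfl fun d _ => ?_
    rw [sum_const, ← Nat.Ioc_filter_dvd_card_eq_div]
    rfl
  · intro m d
    simp only [mem_Icc, Nat.mem_divisors, mem_filter]
    constructor
    · rintro ⟨⟨hm1, hmN⟩, hdm, -⟩
      have := Nat.le_of_dvd hm1 hdm
      have := Nat.pos_of_dvd_of_pos hdm hm1
      omega
    · rintro ⟨⟨hm, hdm⟩, -⟩
      exact ⟨hm, hdm, by omega⟩

theorem Nat.cast_div_div_le (N d : ℕ) : ((N / d : ℕ) : ℝ) / N ≤ 1 / d := by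
  rcases eq_or_ne N 0 with rfl | hN
  · simp
  calc ((N / d : ℕ) : ℝ) / N ≤ ((N : ℝ) / d) / N := by gcongr; exact Nat.cast_div_le
    _ = 1 / d := by field_simp

theorem Nat.tendsto_cast_div_div_atTop (d : ℕ) :
    Tendsto (fun N : ℕ => ((N / d : ℕ) : ℝ) / N) atTop (𝓝 (1 / d)) := by
  rcases eq_or_ne d 0 with rfl | hd
  · simp
  have hlim := ((tendsto_nat_floor_div_atTop (R := ℝ)).comp
    (tendsto_natCast_atTop_atTop.atTop_div_const (r := (d : ℝ)) (by positivity))).mul_const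
    (1 / (d : ℝ))
  rw [one_mul] at hlim
  refine hlim.congr fun N => ?_
  simp only [Function.comp_apply, Nat.floor_div_eq_div]
  field_simp

/-- Wintner's mean value theorem for `f * ζ`. -/
theorem tendsto_cesaro_sum_divisors {𝕜 : Type*} [RCLike 𝕜] {f : ℕ → 𝕜}
    (hf : Summable fun d => f d / d) :
    Tendsto (fun N : ℕ => (1 / (N : 𝕜)) * ∑ m ∈ Icc 1 N, ∑ d ∈ m.divisors, f d) atTop
      (𝓝 (∑' d, f d / d)) := by
  have hconv : Tendsto (fun N => ∑' d, (((N / d : ℕ) : ℝ) / N : ℝ) * f d) atTop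
      (𝓝 (∑' d, f d / d)) := by
    refine tendsto_tsum_of_dominated_convergence (summable_norm_iff.mpr hf) (fun d => ?_)
      (Eventually.of_forall fun N d => ?_)
    · have := ((RCLike.continuous_ofReal.tendsto _).comp
        (Nat.tendsto_cast_div_div_atTop d)).mul_const (f d)
      simpa [div_eq_inv_mul] using this
    · calc ‖((((N / d : ℕ) : ℝ) / N : ℝ) : 𝕜) * f d‖ = ((N / d : ℕ) : ℝ) / N * ‖f d‖ := by
            rw [norm_mul, RCLike.norm_ofReal, abs_of_nonneg (by positivity)]
        _ ≤ 1 / d * ‖f d‖ := mul_le_mul_of_nonneg_right (Nat.cast_div_div_le N d) (norm_nonneg _)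
        _ = ‖f d / d‖ := by rw [norm_div, RCLike.norm_natCast, one_div_mul_eq_div]
  refine hconv.congr fun N => ?_
  rw [tsum_eq_sum (s := Icc 1 N), Nat.sum_Icc_sum_divisors_eq_sum_div_smul, mul_sum]
  · refine sum_congr rfl fun d _ => ?_
    push_cast
    rw [nsmul_eq_mul]
    ring
  · intro d hd
    simp only [mem_Icc, not_and_or, not_le, Nat.lt_one_iff] at hd
    rcases hd with rfl | hNd
    · simp
    · simp [Nat.div_eq_of_lt hNd]

theorem DirichletCharacter.prod_primeFactors_one_sub_div_cpow {n : ℕ}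
    (χ : DirichletCharacter ℂ n) (w : ℂ) {m : ℕ} (hm : m ≠ 0) :
    ∏ p ∈ m.primeFactors, (1 - χ p / (p : ℂ) ^ w) =
      ∑ d ∈ m.divisors, μ d * (χ d / (d : ℂ) ^ w) := by
  have hmul : (toArithmeticFunction fun d => χ d / (d : ℂ) ^ w).IsMultiplicative := by
    refine IsMultiplicative.iff_ne_zero.mpr
      ⟨by simp [toArithmeticFunction], fun {a b} ha hb _ => ?_⟩
    simp [toArithmeticFunction, ha, hb, Complex.natCast_mul_natCast_cpow, div_mul_div_comm]
  have happly {d : ℕ} (hd : d ≠ 0) :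
      toArithmeticFunction (fun d => χ d / (d : ℂ) ^ w) d = χ d / (d : ℂ) ^ w := by
    simp [toArithmeticFunction, hd]
  have := hmul.prod_primeFactors_one_sub hm
  rwa [prod_congr rfl fun p hp => by rw [happly (Nat.pos_of_mem_primeFactors hp).ne'],
    sum_congr rfl fun d hd => by rw [happly (Nat.pos_of_mem_divisors hd).ne']] at this

theorem LSeries.term_eq_div_cpow_sub_one_div (f : ℕ → ℂ) (s : ℂ) (d : ℕ) :
    LSeries.term f s d = f d / (d : ℂ) ^ (s - 1) / d := by
  rcases eq_or_ne d 0 with rfl | hd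
  · simp
  have hd' : (d : ℂ) ≠ 0 := Nat.cast_ne_zero.mpr hd
  rw [term_of_ne_zero hd, Complex.cpow_sub _ _ hd', Complex.cpow_one]
  field_simp

theorem cesaro_dirichlet_minus_general (n : ℕ) (χ : DirichletCharacter ℂ n)
    (s : ℂ) (hs : 1 < s.re) :
    Tendsto (fun N : ℕ =>
        (1 / (N : ℂ)) * ∑ m ∈ Finset.Icc 1 N,
          ∏ p ∈ m.primeFactors, (1 - χ p / (p : ℂ) ^ (s - 1)))
      atTop (nhds (1 / LSeries (fun m : ℕ => χ m) s)) := by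
  have hterm (d : ℕ) : μ d * (χ d / (d : ℂ) ^ (s - 1)) / d = LSeries.term (↗χ * ↗μ) s d := by
    rw [LSeries.term_eq_div_cpow_sub_one_div, Pi.mul_apply]
    ring
  have hsummable : LSeriesSummable (↗χ * ↗μ) s :=
    χ.LSeriesSummable_mul (LSeriesSummable_moebius_iff.mpr hs)
  have hlim := tendsto_cesaro_sum_divisors (f := fun d => μ d * (χ d / (d : ℂ) ^ (s - 1)))
    (by simp only [hterm]; exact hsummable)
  rw [tsum_congr hterm, ← LSeries,
    eq_one_div_of_mul_eq_one_right (DirichletCharacter.LSeries.mul_mu_eq_one χ hs)] at hlim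
  refine hlim.congr fun N => ?_
  congr 1
  refine sum_congr rfl fun m hm => (χ.prod_primeFactors_one_sub_div_cpow _ ?_).symm
  rw [mem_Icc] at hm
  omega

theorem cesaro_dirichlet_minus (n : ℕ) [NeZero n] (χ : DirichletCharacter ℂ n)
    (s : ℂ) (hs : 1 < s.re) :
    Tendsto (fun N : ℕ =>
        (1 / (N : ℂ)) * ∑ m ∈ Finset.Icc 1 N,
          ∏ p ∈ m.primeFactors, (1 - χ p / (p : ℂ) ^ (s - 1)))
      atTop (nhds (1 / LSeries (fun m : ℕ => χ m) s)) :=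
  cesaro_dirichlet_minus_general n χ s hs
end
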